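/- arXiv:1401.7084 — 2 statements merged into one kernel-verified Lean document; each statement's English description precedes it below -/
import Mathlib

section
/- If A = I − E is an n×n real matrix with |e_{ij}| ≤ ε for all 1 ≤ i,j ≤ n, and nε ≤ 1, then det(A) ≥ 1 − nε. -/
/-!
Induction on `n`, eliminating the first row and column of `I - E`. If `|e_ij| ≤ ε` and
`(n + 1) ε ≤ 1`, the pivot `1 - e₀₀` is at least `1 - ε > 0` and its Schur complement is `I - E'`
with `|e'_ij| ≤ ε + ε² / (1 - ε) = ε / (1 - ε) =: ε'`. Since `n ε' ≤ 1` is equivalent to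
`(n + 1) ε ≤ 1`, induction gives `det (I - E) ≥ (1 - ε) (1 - n ε') = 1 - (n + 1) ε`.
-/

open Matrix

namespace Matrix

variable {K : Type*} [Field K] {n : ℕ}

def schurComplementZero (M : Matrix (Fin (n + 1)) (Fin (n + 1)) K) : Matrix (Fin n) (Fin n) K :=
  of fun i j => M i.succ j.succ - M i.succ 0 / M 0 0 * M 0 j.succ

theorem det_eq_mul_det_schurComplementZero (M : Matrix (Fin (n + 1)) (Fin (n + 1)) K)
    (h : M 0 0 ≠ 0) : M.det = M 0 0 * M.schurComplementZero.det := by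
  -- clear column `0` below the pivot with row operations, then expand along that column
  set B : Matrix (Fin (n + 1)) (Fin (n + 1)) K :=
    of (Fin.cons (M 0) fun i j => M i.succ j - M i.succ 0 / M 0 0 * M 0 j)
  have hrow : M.det = B.det := by
    refine det_eq_of_forall_row_eq_smul_add_const (Fin.cons 0 fun i => M i.succ 0 / M 0 0) 0
      rfl fun i j => ?_
    cases i using Fin.cases <;> simp [B]
  have hcol : ∀ i : Fin n, B i.succ 0 = 0 := fun i => by simp [B, h]
  rw [hrow, det_succ_column_zero, Fin.sum_univ_succ]
  simp only [hcol, mul_zero, zero_mul, Finset.sum_const_zero, add_zero]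
  simp [B, schurComplementZero, submatrix]

theorem schurComplementZero_one_sub (E : Matrix (Fin (n + 1)) (Fin (n + 1)) K) :
    (1 - E).schurComplementZero =
      1 - of fun i j : Fin n => E i.succ j.succ + E i.succ 0 * E 0 j.succ / (1 - E 0 0) := by
  ext i j
  simp [schurComplementZero, one_apply, (Fin.succ_ne_zero _).symm]
  ring

theorem det_one_sub_eq_mul_det_one_sub (E : Matrix (Fin (n + 1)) (Fin (n + 1)) K)
    (h : E 0 0 ≠ 1) : (1 - E).det = (1 - E 0 0) *
      (1 - of fun i j : Fin n => E i.succ j.succ + E i.succ 0 * E 0 j.succ / (1 - E 0 0)).det := by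
  rw [det_eq_mul_det_schurComplementZero _ (by simpa [sub_eq_zero] using h.symm),
    schurComplementZero_one_sub]
  simp

end Matrix

theorem abs_add_mul_div_le {ε a x y z : ℝ} (hε : ε < 1) (ha : 1 - ε ≤ a)
    (hx : |x| ≤ ε) (hy : |y| ≤ ε) (hz : |z| ≤ ε) : |x + y * z / a| ≤ ε / (1 - ε) := by
  have h1ε : 0 < 1 - ε := by linarith
  have hyz : |y * z / a| ≤ ε * ε / (1 - ε) := by
    rw [abs_div, abs_mul, abs_of_pos (h1ε.trans_le ha)]
    have hε0 : 0 ≤ ε := (abs_nonneg y).trans hy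
    exact div_le_div₀ (mul_nonneg hε0 hε0) (mul_le_mul hy hz (abs_nonneg z) hε0) h1ε ha
  calc |x + y * z / a| ≤ ε + ε * ε / (1 - ε) := (abs_add_le _ _).trans (add_le_add hx hyz)
    _ = ε / (1 - ε) := by field_simp; ring

theorem one_sub_mul_le_det_one_sub (n : ℕ) (ε : ℝ) (hsize : (n : ℝ) * ε ≤ 1)
    (E : Matrix (Fin n) (Fin n) ℝ) (hE : ∀ i j, |E i j| ≤ ε) :
    1 - (n : ℝ) * ε ≤ (1 - E).det := by
  induction n generalizing ε with
  | zero => simp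
  | succ n ih =>
    have hpivot : 1 - ε ≤ 1 - E 0 0 := by linarith [(le_abs_self _).trans (hE 0 0)]
    rcases Nat.eq_zero_or_pos n with rfl | hn
    · simpa [det_unique] using hpivot
    have hε1 : ε < 1 := by
      push_cast at hsize; nlinarith [(Nat.one_le_cast (α := ℝ)).mpr hn]
    have h1ε : 0 < 1 - ε := by linarith
    have hsize' : (n : ℝ) * (ε / (1 - ε)) ≤ 1 := by
      rw [← mul_div_assoc, div_le_one h1ε]; push_cast at hsize; linarith
    have hdet := ih _ hsize' (of fun i j => E i.succ j.succ + E i.succ 0 * E 0 j.succ / (1 - E 0 0))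
      fun i j => abs_add_mul_div_le hε1 hpivot (hE _ _) (hE _ _) (hE _ _)
    calc 1 - ((n + 1 : ℕ) : ℝ) * ε = (1 - ε) * (1 - n * (ε / (1 - ε))) := by
          push_cast; field_simp; ring
      _ ≤ _ := mul_le_mul hpivot hdet (by linarith) (h1ε.le.trans hpivot)
      _ = (1 - E).det := (det_one_sub_eq_mul_det_one_sub E (by linarith)).symm

theorem det_lower_bound_ostrowski_general
    (n : ℕ) (ε : ℝ) (hsize : (n : ℝ) * ε ≤ 1)
    (E A : Matrix (Fin n) (Fin n) ℝ)
    (hA : A = 1 - E)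
    (hE : ∀ i j, |E i j| ≤ ε) :
    1 - (n : ℝ) * ε ≤ A.det :=
  hA ▸ one_sub_mul_le_det_one_sub n ε hsize E hE

/-- If `A = I - E` is an `n × n` real matrix with `|e i j| ≤ ε` for all `i, j` and
`n ε ≤ 1`, then `det A ≥ 1 - n ε`. -/
theorem det_lower_bound_ostrowski
    (n : ℕ) (ε : ℝ) (hε : 0 ≤ ε) (hsize : (n : ℝ) * ε ≤ 1)
    (E A : Matrix (Fin n) (Fin n) ℝ)
    (hA : A = 1 - E)
    (hE : ∀ i j, |E i j| ≤ ε) :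
    1 - (n : ℝ) * ε ≤ A.det :=
  det_lower_bound_ostrowski_general n ε hsize E A hA hE
end

section
/- If A = I − E is an n×n real matrix with |e_{ij}| ≤ ε for all 1 ≤ i,j ≤ n and e_{ii} = 0 for 1 ≤ i ≤ n, where ε ≥ 0, then det(A) ≤ (1 + (n−1)ε²)^{n/2}. No upper restriction on ε is required; for ε = 1 this reduces to Hadamard's bound n^{n/2}. -/
/-! det(A)² = det(AᵀA), and AM-GM on the eigenvalues of the positive semidefinite matrix AᵀA
bounds it by (tr(AᵀA)/n)ⁿ. The trace is the sum of the squared column norms of A, each at most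
1 + (n - 1)ε² since A has unit diagonal and off-diagonal entries of absolute value at most ε. -/

open Matrix Finset

theorem Real.prod_le_sum_div_card_pow {ι : Type*} (s : Finset ι) (z : ι → ℝ)
    (hz : ∀ i ∈ s, 0 ≤ z i) : ∏ i ∈ s, z i ≤ ((∑ i ∈ s, z i) / #s) ^ #s := by
  rcases s.eq_empty_or_nonempty with rfl | hs
  · simp
  have hcard : (0 : ℝ) < #s := by exact_mod_cast hs.card_pos
  have amgm := Real.geom_mean_le_arith_mean s (fun _ ↦ 1) z (fun _ _ ↦ zero_le_one)
    (by simpa using hcard) hz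
  simp only [Real.rpow_one, sum_const, nsmul_eq_mul, mul_one, one_mul] at amgm
  calc ∏ i ∈ s, z i = ((∏ i ∈ s, z i) ^ ((#s : ℝ))⁻¹) ^ #s :=
        (Real.rpow_inv_natCast_pow (prod_nonneg hz) hs.card_pos.ne').symm
    _ ≤ ((∑ i ∈ s, z i) / #s) ^ #s :=
        pow_le_pow_left₀ (Real.rpow_nonneg (prod_nonneg hz) _) amgm _

theorem Matrix.PosSemidef.det_le_trace_div_card_pow {n : Type*} [Fintype n] [DecidableEq n]
    {M : Matrix n n ℝ} (hM : M.PosSemidef) :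
    M.det ≤ (M.trace / Fintype.card n) ^ Fintype.card n := by
  rw [hM.isHermitian.det_eq_prod_eigenvalues, hM.isHermitian.trace_eq_sum_eigenvalues]
  simpa using Real.prod_le_sum_div_card_pow univ _ fun i _ ↦ hM.eigenvalues_nonneg i

theorem Matrix.det_sq_le_pow_of_sum_sq_col_le {n : Type*} [Fintype n] [DecidableEq n]
    (A : Matrix n n ℝ) {c : ℝ} (hcol : ∀ j, ∑ i, A i j ^ 2 ≤ c) :
    A.det ^ 2 ≤ c ^ Fintype.card n := by
  rcases isEmpty_or_nonempty n with hn | hn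
  · simp
  have htrace : (Aᴴ * A).trace = ∑ j, ∑ i, A i j ^ 2 := by
    simp [trace, mul_apply, sq]
  have hcard : (0 : ℝ) < Fintype.card n := by exact_mod_cast Fintype.card_pos
  calc A.det ^ 2 = (Aᴴ * A).det := by simp [det_mul, sq]
    _ ≤ ((Aᴴ * A).trace / Fintype.card n) ^ Fintype.card n :=
        (posSemidef_conjTranspose_mul_self A).det_le_trace_div_card_pow
    _ ≤ c ^ Fintype.card n := by
        gcongr
        · exact div_nonneg (htrace ▸ sum_nonneg fun j _ ↦ sum_nonneg fun i _ ↦ sq_nonneg _)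
            hcard.le
        · rw [div_le_iff₀ hcard, htrace]
          simpa [mul_comm] using sum_le_sum fun j (_ : j ∈ univ) ↦ hcol j

theorem Matrix.sum_sq_col_one_sub_le {n : Type*} [Fintype n] [DecidableEq n]
    {E : Matrix n n ℝ} {ε : ℝ} (hE : ∀ i j, |E i j| ≤ ε) (hdiag : ∀ i, E i i = 0) (j : n) :
    ∑ i, (1 - E) i j ^ 2 ≤ 1 + ((Fintype.card n : ℝ) - 1) * ε ^ 2 := by
  have hoff : ∀ i ∈ univ.erase j, (1 - E) i j ^ 2 ≤ ε ^ 2 := fun i hi ↦ by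
    rw [sub_apply, one_apply_ne (ne_of_mem_erase hi), zero_sub, neg_sq, ← sq_abs]
    exact pow_le_pow_left₀ (abs_nonneg _) (hE i j) 2
  have hcard : ((#(univ.erase j) : ℕ) : ℝ) = Fintype.card n - 1 := by
    rw [card_erase_of_mem (mem_univ j), card_univ, Nat.cast_pred (Fintype.card_pos_iff.2 ⟨j⟩)]
  calc ∑ i, (1 - E) i j ^ 2 = (1 - E) j j ^ 2 + ∑ i ∈ univ.erase j, (1 - E) i j ^ 2 :=
        (add_sum_erase _ _ (mem_univ j)).symm
    _ ≤ 1 + ((Fintype.card n : ℝ) - 1) * ε ^ 2 := by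
        rw [sub_apply, one_apply_eq, hdiag, sub_zero, one_pow, ← hcard, ← nsmul_eq_mul]
        gcongr
        exact sum_le_card_nsmul _ _ _ hoff

theorem Real.le_rpow_half_of_sq_le_pow {x c : ℝ} {n : ℕ} (hc : 0 ≤ c) (h : x ^ 2 ≤ c ^ n) :
    x ≤ c ^ ((n : ℝ) / 2) :=
  calc x ≤ |x| := le_abs_self x
    _ ≤ √(c ^ n) := Real.abs_le_sqrt h
    _ = c ^ ((n : ℝ) / 2) := by
        rw [Real.sqrt_eq_rpow, ← Real.rpow_natCast, ← Real.rpow_mul hc, mul_one_div]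

theorem det_upper_bound_zero_diag_general
    (n : ℕ) (hn : 1 ≤ n) (ε : ℝ)
    (E A : Matrix (Fin n) (Fin n) ℝ)
    (hA : A = 1 - E)
    (hE : ∀ i j, |E i j| ≤ ε)
    (hdiag : ∀ i, E i i = 0) :
    A.det ≤ (1 + ((n : ℝ) - 1) * ε ^ 2) ^ ((n : ℝ) / 2) := by
  have hc : 0 ≤ 1 + ((n : ℝ) - 1) * ε ^ 2 := by
    have : (1 : ℝ) ≤ n := by exact_mod_cast hn
    positivity
  refine Real.le_rpow_half_of_sq_le_pow hc ?_
  simpa [hA] using det_sq_le_pow_of_sum_sq_col_le (1 - E) (sum_sq_col_one_sub_le hE hdiag)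

/-- If `A = I - E` with `|e i j| ≤ ε` for all `i, j`, zero diagonal `e i i = 0`, and
`ε ≥ 0`, then `det A ≤ (1 + (n-1) ε²) ^ (n/2)` (real power). No upper restriction
on `ε`; for `ε = 1` this is Hadamard's bound `n ^ (n/2)`. -/
theorem det_upper_bound_zero_diag
    (n : ℕ) (hn : 1 ≤ n) (ε : ℝ) (hε : 0 ≤ ε)
    (E A : Matrix (Fin n) (Fin n) ℝ)
    (hA : A = 1 - E)
    (hE : ∀ i j, |E i j| ≤ ε)
    (hdiag : ∀ i, E i i = 0) :
    A.det ≤ (1 + ((n : ℝ) - 1) * ε ^ 2) ^ ((n : ℝ) / 2) :=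
  det_upper_bound_zero_diag_general n hn ε E A hA hE hdiag
end
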